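/- Let (X,⪯,G) be a G-complete partially ordered G-metric space and let T : X → X be non-decreasing with respect to ⪯ with x₀ ⪯ T x₀ for some x₀ ∈ X. Suppose there exist ψ ∈ Ψ, φ ∈ Φ, and a nonnegative Lebesgue integrable function ρ on ℝ such that ∫₀^ε ρ(t) dt > 0 for every ε > 0, and for all x, y, z ∈ X with x ⪯ y ⪯ z, ∫₀^{ψ(G(Tx,Ty,Tz))} ρ(t) dt ≤ ∫₀^{ψ(M(x,y,z))} ρ(t) dt − ∫₀^{φ(M(x,y,z))} ρ(t) dt. If either T is G-continuous or (X,⪯,G) is regular non-decreasing, then T has a fixed point. -/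
import Mathlib


open Filter Topology Set

/-- A G-metric on a set `X`, valued in `ℝ` (with values in `[0,∞)`). -/
structure IsGMetric {X : Type*} (G : X → X → X → ℝ) : Prop where
  nonneg : ∀ x y z, 0 ≤ G x y z
  /-- (G1) -/
  eq_zero_of_eq : ∀ x, G x x x = 0
  /-- (G2) -/
  pos_of_ne : ∀ x y, x ≠ y → 0 < G x x y
  /-- (G3) -/
  le_of_ne : ∀ x y z, y ≠ z → G x x y ≤ G x y z
  /-- (G4): invariance under permutations (generated by these two transpositions) -/
  swap_left : ∀ x y z, G x y z = G y x z
  swap_right : ∀ x y z, G x y z = G x z y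
  /-- (G5) rectangle inequality -/
  rect : ∀ x y z a, G x y z ≤ G x a a + G a y z

/-- A sequence `s` G-converges to `x` iff `G x (s n) (s n) → 0`. -/
def GConvergesTo {X : Type*} (G : X → X → X → ℝ) (s : ℕ → X) (x : X) : Prop :=
  Tendsto (fun n => G x (s n) (s n)) atTop (𝓝 0)

/-- A sequence is G-Cauchy. -/
def GCauchy {X : Type*} (G : X → X → X → ℝ) (s : ℕ → X) : Prop :=
  ∀ ε > (0 : ℝ), ∃ N : ℕ, ∀ n ≥ N, ∀ m ≥ N, ∀ l ≥ N, G (s n) (s m) (s l) < ε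

/-- `(X, G)` is G-complete. -/
def GComplete {X : Type*} (G : X → X → X → ℝ) : Prop :=
  ∀ s : ℕ → X, GCauchy G s → ∃ x, GConvergesTo G s x

/-- `T` is G-continuous. -/
def GContinuousMap {X : Type*} (G : X → X → X → ℝ) (T : X → X) : Prop :=
  ∀ (s : ℕ → X) (x : X), GConvergesTo G s x → GConvergesTo G (fun n => T (s n)) (T x)

/-- `(X, ⪯, G)` is regular non-decreasing. -/
def RegularNondecreasing {X : Type*} [PartialOrder X] (G : X → X → X → ℝ) : Prop :=
  ∀ (s : ℕ → X) (x : X), Monotone s → GConvergesTo G s x → ∀ n, s n ≤ x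

/-- Membership in the class `Ψ`: continuous, non-decreasing, nonnegative on `[0,∞)`
and vanishing exactly at `0`. -/
def MemPsi (ψ : ℝ → ℝ) : Prop :=
  ContinuousOn ψ (Ici 0) ∧ MonotoneOn ψ (Ici 0) ∧
    (∀ t ≥ (0 : ℝ), 0 ≤ ψ t) ∧ (∀ t ≥ (0 : ℝ), (ψ t = 0 ↔ t = 0))

/-- Membership in the class `Φ`: lower semicontinuous, nonnegative on `[0,∞)`
and vanishing exactly at `0`. -/
def MemPhi (φ : ℝ → ℝ) : Prop :=
  LowerSemicontinuousOn φ (Ici 0) ∧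
    (∀ t ≥ (0 : ℝ), 0 ≤ φ t) ∧ (∀ t ≥ (0 : ℝ), (φ t = 0 ↔ t = 0))

/-- The quantity `M(x,y,z)` associated with `G` and `T`. -/
noncomputable def Mfun {X : Type*} (G : X → X → X → ℝ) (T : X → X) (x y z : X) : ℝ :=
  max (G x (T x) y) (max (G x (T x) z) (max (G x y z) (max (G y (T y) (T y))
    (max (G z (T z) (T z)) ((G x (T y) (T z) + G (T x) y z) / 2)))))

/-- The quantity `N(x,y)` associated with `G` and `T`. -/
noncomputable def Nfun {X : Type*} (G : X → X → X → ℝ) (T : X → X) (x y : X) : ℝ :=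
  max (G x (T x) y) (max (G (T x) (T (T x)) (T (T x)))
    (max ((G x (T x) (T x) + G y (T y) (T y)) / 2)
      ((G x (T (T x)) (T y) + G (T x) (T x) y) / 2)))

section AuxG
variable {X : Type*} {G : X → X → X → ℝ}

theorem IsGMetric.cycle (hG : IsGMetric G) (x y z : X) : G x y z = G z x y := by
  rw [hG.swap_right x y z, hG.swap_left x z y]

theorem IsGMetric.perm4 (hG : IsGMetric G) (x y z : X) : G x y z = G y z x := by
  rw [hG.cycle x y z, hG.cycle z x y]

theorem IsGMetric.perm5 (hG : IsGMetric G) (x y z : X) : G x y z = G z y x := by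
  rw [hG.cycle x y z, hG.swap_right z x y]

theorem IsGMetric.two_le (hG : IsGMetric G) (x y : X) : G x y y ≤ 2 * G x x y := by
  have e1 : G x y y = G y y x := by rw [hG.cycle x y y, hG.cycle y x y]
  have h2 := hG.rect y y x x
  have e3 : G y x x = G x x y := by rw [hG.cycle y x x, hG.swap_right x y x]
  have e4 : G x y x = G x x y := hG.swap_right x y x
  linarith

theorem IsGMetric.two_le' (hG : IsGMetric G) (x y : X) : G x x y ≤ 2 * G x y y := by
  have h := hG.two_le y x
  have e3 : G y x x = G x x y := by rw [hG.cycle y x x, hG.swap_right x y x]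
  have e5 : G y y x = G x y y := by rw [hG.cycle y y x]
  linarith

theorem Mfun_le {T : X → X} {x y z : X} {c : ℝ}
    (h1 : G x (T x) y ≤ c) (h2 : G x (T x) z ≤ c) (h3 : G x y z ≤ c)
    (h4 : G y (T y) (T y) ≤ c) (h5 : G z (T z) (T z) ≤ c)
    (h6 : (G x (T y) (T z) + G (T x) y z) / 2 ≤ c) : Mfun G T x y z ≤ c := by
  unfold Mfun
  simp only [max_le_iff]
  exact ⟨h1, h2, h3, h4, h5, h6⟩

theorem le_Mfun₃ (G : X → X → X → ℝ) (T : X → X) (x y z : X) : G x y z ≤ Mfun G T x y z := by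
  unfold Mfun
  simp only [le_max_iff, le_refl, true_or, or_true]

theorem le_Mfun₄ (G : X → X → X → ℝ) (T : X → X) (x y z : X) : G y (T y) (T y) ≤ Mfun G T x y z := by
  unfold Mfun
  simp only [le_max_iff, le_refl, true_or, or_true]

end AuxG
theorem stmt2 {X : Type*} [Nonempty X] [PartialOrder X] (G : X → X → X → ℝ)
    (hG : IsGMetric G) (hcomp : GComplete G) (T : X → X) (hTmono : Monotone T)
    (x₀ : X) (hx₀ : x₀ ≤ T x₀)
    (ψ φ : ℝ → ℝ) (hψ : MemPsi ψ) (hφ : MemPhi φ)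
    (ρ : ℝ → ℝ) (hρ_nonneg : ∀ t, 0 ≤ ρ t)
    (hρ_int : MeasureTheory.Integrable ρ)
    (hρ_pos : ∀ ε > (0 : ℝ), 0 < ∫ t in (0 : ℝ)..ε, ρ t)
    (hcontr : ∀ x y z : X, x ≤ y → y ≤ z →
      (∫ t in (0 : ℝ)..(ψ (G (T x) (T y) (T z))), ρ t) ≤
        (∫ t in (0 : ℝ)..(ψ (Mfun G T x y z)), ρ t) -
          (∫ t in (0 : ℝ)..(φ (Mfun G T x y z)), ρ t))
    (hcases : GContinuousMap G T ∨ RegularNondecreasing G) :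
    ∃ x : X, T x = x := by
  classical
  obtain ⟨hψc, hψm, hψnn, hψiff⟩ := hψ
  obtain ⟨hφl, hφnn, hφiff⟩ := hφ
  have hInt : ∀ a b : ℝ, IntervalIntegrable ρ MeasureTheory.volume a b :=
    fun a b => hρ_int.intervalIntegrable
  have hFmono : ∀ u v : ℝ, u ≤ v → (∫ t in (0:ℝ)..u, ρ t) ≤ ∫ t in (0:ℝ)..v, ρ t := by
    intro u v huv
    have hadd := intervalIntegral.integral_add_adjacent_intervals (hInt 0 u) (hInt u v)
    have hnn : 0 ≤ ∫ t in u..v, ρ t :=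
      intervalIntegral.integral_nonneg huv fun t _ => hρ_nonneg t
    linarith
  have hFc : Continuous fun u : ℝ => ∫ t in (0:ℝ)..u, ρ t :=
    intervalIntegral.continuous_primitive hInt 0
  have hφpos : ∀ u : ℝ, 0 < u → 0 < φ u := by
    intro u hu
    rcases lt_or_eq_of_le (hφnn u hu.le) with h | h
    · exact h
    · exact absurd ((hφiff u hu.le).mp h.symm) (ne_of_gt hu)
  -- key contradiction lemma
  have key : ∀ (a b : ℕ → ℝ) (L : ℝ), 0 < L → (∀ k, 0 ≤ a k) → (∀ k, 0 ≤ b k) →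
      Tendsto a atTop (𝓝 L) → Tendsto b atTop (𝓝 L) →
      (∀ k, (∫ t in (0:ℝ)..(ψ (a k)), ρ t) ≤ (∫ t in (0:ℝ)..(ψ (b k)), ρ t)
        - ∫ t in (0:ℝ)..(φ (b k)), ρ t) → False := by
    intro a b L hL ha0 hb0 haL hbL hineq
    have haL' : Tendsto a atTop (𝓝[Ici (0:ℝ)] L) :=
      tendsto_nhdsWithin_of_tendsto_nhds_of_eventually_within a haL (Eventually.of_forall ha0)
    have hbL' : Tendsto b atTop (𝓝[Ici (0:ℝ)] L) :=
      tendsto_nhdsWithin_of_tendsto_nhds_of_eventually_within b hbL (Eventually.of_forall hb0)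
    have hψa : Tendsto (fun k => ψ (a k)) atTop (𝓝 (ψ L)) := (hψc L hL.le).tendsto.comp haL'
    have hψb : Tendsto (fun k => ψ (b k)) atTop (𝓝 (ψ L)) := (hψc L hL.le).tendsto.comp hbL'
    have hFψa : Tendsto (fun k => ∫ t in (0:ℝ)..(ψ (a k)), ρ t) atTop
        (𝓝 (∫ t in (0:ℝ)..(ψ L), ρ t)) := (hFc.tendsto (ψ L)).comp hψa
    have hFψb : Tendsto (fun k => ∫ t in (0:ℝ)..(ψ (b k)), ρ t) atTop
        (𝓝 (∫ t in (0:ℝ)..(ψ L), ρ t)) := (hFc.tendsto (ψ L)).comp hψb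
    have hφLpos : 0 < φ L := hφpos L hL
    have hev : ∀ᶠ k in atTop, φ L / 2 < φ (b k) :=
      hbL'.eventually (hφl L hL.le (φ L / 2) (by linarith))
    have hc : 0 < ∫ t in (0:ℝ)..(φ L / 2), ρ t := hρ_pos _ (by linarith)
    have hfinal : (∫ t in (0:ℝ)..(ψ L), ρ t) + (∫ t in (0:ℝ)..(φ L / 2), ρ t)
        ≤ ∫ t in (0:ℝ)..(ψ L), ρ t := by
      refine le_of_tendsto_of_tendsto (hFψa.add tendsto_const_nhds) hFψb ?_
      filter_upwards [hev] with k hk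
      have h1 := hFmono _ _ hk.le
      have h2 := hineq k
      linarith
    linarith
  -- the Picard sequence
  set s : ℕ → X := fun n => T^[n] x₀ with hsdef
  have hs_succ : ∀ n, s (n+1) = T (s n) := by
    intro n; simp only [hsdef]; exact Function.iterate_succ_apply' T n x₀
  have hs_le : ∀ n, s n ≤ s (n+1) := by
    intro n
    induction n with
    | zero => simpa [hsdef] using hx₀
    | succ n ih =>
      have h := hTmono ih
      rw [← hs_succ n, ← hs_succ (n+1)] at h
      exact h
  have hs_mono : Monotone s := monotone_nat_of_le_succ hs_le
  have hgnn : ∀ n, (0:ℝ) ≤ G (s n) (s (n+1)) (s (n+1)) := fun n => hG.nonneg _ _ _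
  have hM1 : ∀ n, Mfun G T (s n) (s (n+1)) (s (n+1))
      = max (G (s n) (s (n+1)) (s (n+1))) (G (s (n+1)) (s (n+2)) (s (n+2))) := by
    intro n
    have e1 : T (s n) = s (n+1) := (hs_succ n).symm
    have e2 : T (s (n+1)) = s (n+1+1) := (hs_succ (n+1)).symm
    apply le_antisymm
    · refine Mfun_le ?_ ?_ ?_ ?_ ?_ ?_
      · rw [e1]; exact le_max_left _ _
      · rw [e1]; exact le_max_left _ _
      · exact le_max_left _ _
      · rw [e2]; exact le_max_right _ _
      · rw [e2]; exact le_max_right _ _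
      · rw [e1, e2]
        have h1 : G (s n) (s (n+1+1)) (s (n+1+1)) ≤ G (s n) (s (n+1)) (s (n+1))
            + G (s (n+1)) (s (n+1+1)) (s (n+1+1)) := hG.rect _ _ _ (s (n+1))
        have h2 : G (s (n+1)) (s (n+1)) (s (n+1)) = 0 := hG.eq_zero_of_eq _
        have h3 := le_max_left (G (s n) (s (n+1)) (s (n+1)))
          (G (s (n+1)) (s (n+2)) (s (n+2)))
        have h4 := le_max_right (G (s n) (s (n+1)) (s (n+1)))
          (G (s (n+1)) (s (n+2)) (s (n+2)))
        have h5 : G (s (n+1)) (s (n+2)) (s (n+2)) = G (s (n+1)) (s (n+1+1)) (s (n+1+1)) := rfl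
        rw [h5] at h4
        linarith
    · apply max_le
      · exact le_Mfun₃ G T _ _ _
      · have h := le_Mfun₄ G T (s n) (s (n+1)) (s (n+1))
        rw [e2] at h
        exact h
  have hstep : ∀ n, (∫ t in (0:ℝ)..(ψ (G (s (n+1)) (s (n+2)) (s (n+2)))), ρ t)
      ≤ (∫ t in (0:ℝ)..(ψ (max (G (s n) (s (n+1)) (s (n+1)))
            (G (s (n+1)) (s (n+2)) (s (n+2))))), ρ t)
        - ∫ t in (0:ℝ)..(φ (max (G (s n) (s (n+1)) (s (n+1)))
            (G (s (n+1)) (s (n+2)) (s (n+2))))), ρ t := by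
    intro n
    have h := hcontr (s n) (s (n+1)) (s (n+1)) (hs_le n) le_rfl
    rw [hM1 n, ← hs_succ n, ← hs_succ (n+1)] at h
    exact h
  have hdec : ∀ n, G (s (n+1)) (s (n+2)) (s (n+2)) ≤ G (s n) (s (n+1)) (s (n+1)) := by
    intro n
    by_contra hlt
    push_neg at hlt
    have hmax : max (G (s n) (s (n+1)) (s (n+1))) (G (s (n+1)) (s (n+2)) (s (n+2)))
        = G (s (n+1)) (s (n+2)) (s (n+2)) := max_eq_right hlt.le
    have h := hstep n
    rw [hmax] at h
    have hpos : 0 < G (s (n+1)) (s (n+2)) (s (n+2)) := lt_of_le_of_lt (hgnn n) hlt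
    have := hρ_pos _ (hφpos _ hpos)
    linarith
  have hant : Antitone (fun n => G (s n) (s (n+1)) (s (n+1))) :=
    antitone_nat_of_succ_le hdec
  have hbdd : BddBelow (range fun n => G (s n) (s (n+1)) (s (n+1))) := by
    refine ⟨0, ?_⟩
    rintro x ⟨n, rfl⟩
    exact hgnn n
  have hgr : Tendsto (fun n => G (s n) (s (n+1)) (s (n+1))) atTop
      (𝓝 (⨅ n, G (s n) (s (n+1)) (s (n+1)))) := tendsto_atTop_ciInf hant hbdd
  have hrnn : (0:ℝ) ≤ ⨅ n, G (s n) (s (n+1)) (s (n+1)) := le_ciInf hgnn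
  have hg0 : Tendsto (fun n => G (s n) (s (n+1)) (s (n+1))) atTop (𝓝 0) := by
    rcases eq_or_lt_of_le hrnn with h | h
    · rw [← h] at hgr; exact hgr
    · exfalso
      refine key (fun n => G (s (n+1)) (s (n+2)) (s (n+2)))
        (fun n => G (s n) (s (n+1)) (s (n+1))) _ h (fun n => hgnn (n+1)) hgnn
        ?_ hgr ?_
      · exact hgr.comp (tendsto_add_atTop_nat 1)
      · intro n
        have h2 := hstep n
        rw [max_eq_left (hdec n)] at h2
        exact h2
  have henn : ∀ n, (0:ℝ) ≤ G (s n) (s n) (s (n+1)) := fun n => hG.nonneg _ _ _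
  have he0 : Tendsto (fun n => G (s n) (s n) (s (n+1))) atTop (𝓝 0) := by
    have h2 : Tendsto (fun n => 2 * G (s n) (s (n+1)) (s (n+1))) atTop (𝓝 0) := by
      simpa using hg0.const_mul 2
    exact squeeze_zero henn (fun n => hG.two_le' _ _) h2
  have hshift : ∀ (f : ℕ → ℝ), Tendsto f atTop (𝓝 0) → ∀ (u : ℕ → ℕ), (∀ k, k ≤ u k) →
      Tendsto (fun k => f (u k)) atTop (𝓝 0) :=
    fun f hf u hu => hf.comp (tendsto_atTop_mono hu tendsto_id)
  have hcauchy : GCauchy G s := by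
    by_contra hnc
    unfold GCauchy at hnc
    push_neg at hnc
    obtain ⟨ε, hε, hH⟩ := hnc
    have hε₀ : 0 < ε / 3 := by linarith
    have hcore : ∀ N a b c : ℕ, N ≤ a → a ≤ b → b ≤ c → ε ≤ G (s a) (s b) (s c) →
        ∃ p q, N ≤ p ∧ p < q ∧ ε / 3 ≤ G (s p) (s p) (s q) := by
      intro N a b c hNa hab hbc hε'
      have h1 : G (s a) (s b) (s c) ≤ G (s a) (s b) (s b) + G (s b) (s b) (s c) :=
        hG.rect (s a) (s b) (s c) (s b)
      have h2 : G (s a) (s b) (s b) ≤ 2 * G (s a) (s a) (s b) := hG.two_le (s a) (s b)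
      by_cases hcase : ε / 3 ≤ G (s a) (s a) (s b)
      · refine ⟨a, b, hNa, ?_, hcase⟩
        rcases lt_or_eq_of_le hab with h | rfl
        · exact h
        · exfalso
          have h0 := hG.eq_zero_of_eq (s a)
          rw [h0] at hcase
          linarith
      · push_neg at hcase
        have hc2 : ε / 3 ≤ G (s b) (s b) (s c) := by linarith
        refine ⟨b, c, le_trans hNa hab, ?_, hc2⟩
        rcases lt_or_eq_of_le hbc with h | rfl
        · exact h
        · exfalso
          have h0 := hG.eq_zero_of_eq (s b)
          rw [h0] at hc2
          linarith
    have hpairs : ∀ N, ∃ p q, N ≤ p ∧ p < q ∧ ε / 3 ≤ G (s p) (s p) (s q) := by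
      intro N
      obtain ⟨n₁, hn₁, m₁, hm₁, l₁, hl₁, hG3⟩ := hH N
      rcases le_total n₁ m₁ with h1 | h1
      · rcases le_total m₁ l₁ with h2 | h2
        · exact hcore N n₁ m₁ l₁ hn₁ h1 h2 hG3
        · rcases le_total n₁ l₁ with h3 | h3
          · rw [hG.swap_right (s n₁) (s m₁) (s l₁)] at hG3
            exact hcore N n₁ l₁ m₁ hn₁ h3 h2 hG3
          · rw [hG.cycle (s n₁) (s m₁) (s l₁)] at hG3
            exact hcore N l₁ n₁ m₁ hl₁ h3 h1 hG3
      · rcases le_total n₁ l₁ with h2 | h2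
        · rw [hG.swap_left (s n₁) (s m₁) (s l₁)] at hG3
          exact hcore N m₁ n₁ l₁ hm₁ h1 h2 hG3
        · rcases le_total m₁ l₁ with h3 | h3
          · rw [hG.perm4 (s n₁) (s m₁) (s l₁)] at hG3
            exact hcore N m₁ l₁ n₁ hm₁ h3 h2 hG3
          · rw [hG.perm5 (s n₁) (s m₁) (s l₁)] at hG3
            exact hcore N l₁ m₁ n₁ hl₁ h3 h1 hG3
    have hsel : ∀ k : ℕ, ∃ p q : ℕ, k ≤ p ∧ p < q ∧ ε / 3 ≤ G (s p) (s p) (s q) ∧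
        ∀ j, p < j → j < q → G (s p) (s p) (s j) < ε / 3 := by
      intro k
      obtain ⟨p, q0, hkp, hpq0, hB0⟩ := hpairs k
      have hex : ∃ q, p < q ∧ ε / 3 ≤ G (s p) (s p) (s q) := ⟨q0, hpq0, hB0⟩
      refine ⟨p, Nat.find hex, hkp, (Nat.find_spec hex).1, (Nat.find_spec hex).2, ?_⟩
      intro j hpj hjq
      by_contra hge
      push_neg at hge
      have := Nat.find_min' hex ⟨hpj, hge⟩
      omega
    choose nf mf hknf hnmf hBf hminf using hsel
    have hβub : ∀ k, G (s (nf k)) (s (nf k)) (s (mf k))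
        ≤ ε / 3 + G (s (mf k - 1)) (s (mf k - 1)) (s (mf k)) := by
      intro k
      have hkn := hknf k
      have hnm := hnmf k
      have hperm : G (s (nf k)) (s (nf k)) (s (mf k)) = G (s (mf k)) (s (nf k)) (s (nf k)) :=
        hG.cycle _ _ _
      have hrect : G (s (mf k)) (s (nf k)) (s (nf k))
          ≤ G (s (mf k)) (s (mf k - 1)) (s (mf k - 1))
            + G (s (mf k - 1)) (s (nf k)) (s (nf k)) := hG.rect _ _ _ _
      have hperm2 : G (s (mf k)) (s (mf k - 1)) (s (mf k - 1))
          = G (s (mf k - 1)) (s (mf k - 1)) (s (mf k)) := hG.perm4 _ _ _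
      have hperm3 : G (s (mf k - 1)) (s (nf k)) (s (nf k))
          = G (s (nf k)) (s (nf k)) (s (mf k - 1)) := hG.perm4 _ _ _
      have hsmall : G (s (nf k)) (s (nf k)) (s (mf k - 1)) ≤ ε / 3 := by
        rcases lt_or_eq_of_le (show nf k ≤ mf k - 1 by omega) with h | h
        · exact (hminf k (mf k - 1) h (by omega)).le
        · rw [← h]
          have h0 := hG.eq_zero_of_eq (s (nf k))
          rw [h0]
          linarith
      linarith
    have hem1 : Tendsto (fun k => G (s (mf k - 1)) (s (mf k - 1)) (s (mf k))) atTop (𝓝 0) := by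
      have hle : ∀ k, k ≤ mf k - 1 := fun k => by
        have := hknf k; have := hnmf k; omega
      have h := hshift (fun n => G (s n) (s n) (s (n+1))) he0 (fun k => mf k - 1) hle
      refine h.congr fun k => ?_
      have hm1 : mf k - 1 + 1 = mf k := by have := hknf k; have := hnmf k; omega
      show G (s (mf k - 1)) (s (mf k - 1)) (s (mf k - 1 + 1))
        = G (s (mf k - 1)) (s (mf k - 1)) (s (mf k))
      rw [hm1]
    have hgn : Tendsto (fun k => G (s (nf k)) (s (nf k + 1)) (s (nf k + 1))) atTop (𝓝 0) :=
      hshift _ hg0 nf hknf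
    have hen : Tendsto (fun k => G (s (nf k)) (s (nf k)) (s (nf k + 1))) atTop (𝓝 0) :=
      hshift _ he0 nf hknf
    have hmge : ∀ k, k ≤ mf k := fun k => by have := hknf k; have := hnmf k; omega
    have hgm : Tendsto (fun k => G (s (mf k)) (s (mf k + 1)) (s (mf k + 1))) atTop (𝓝 0) :=
      hshift _ hg0 mf hmge
    have hem : Tendsto (fun k => G (s (mf k)) (s (mf k)) (s (mf k + 1))) atTop (𝓝 0) :=
      hshift _ he0 mf hmge
    have hβ : Tendsto (fun k => G (s (nf k)) (s (nf k)) (s (mf k))) atTop (𝓝 (ε/3)) := by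
      have hup : Tendsto (fun k => ε / 3 + G (s (mf k - 1)) (s (mf k - 1)) (s (mf k)))
          atTop (𝓝 (ε/3)) := by
        simpa using tendsto_const_nhds.add hem1
      exact tendsto_of_tendsto_of_tendsto_of_le_of_le tendsto_const_nhds hup hBf hβub
    have halow : ∀ k, G (s (nf k)) (s (nf k)) (s (mf k))
        ≤ G (s (mf k)) (s (mf k + 1)) (s (mf k + 1))
          + G (s (nf k + 1)) (s (nf k + 1)) (s (mf k + 1))
          + G (s (nf k)) (s (nf k)) (s (nf k + 1)) := by
      intro k
      have h0 : G (s (nf k)) (s (nf k)) (s (mf k)) = G (s (mf k)) (s (nf k)) (s (nf k)) :=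
        hG.cycle _ _ _
      have h1 : G (s (mf k)) (s (nf k)) (s (nf k))
          ≤ G (s (mf k)) (s (mf k + 1)) (s (mf k + 1))
            + G (s (mf k + 1)) (s (nf k)) (s (nf k)) := hG.rect _ _ _ _
      have h2 : G (s (mf k + 1)) (s (nf k)) (s (nf k))
          ≤ G (s (mf k + 1)) (s (nf k + 1)) (s (nf k + 1))
            + G (s (nf k + 1)) (s (nf k)) (s (nf k)) := hG.rect _ _ _ _
      have h3 : G (s (mf k + 1)) (s (nf k + 1)) (s (nf k + 1))
          = G (s (nf k + 1)) (s (nf k + 1)) (s (mf k + 1)) := hG.perm4 _ _ _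
      have h4 : G (s (nf k + 1)) (s (nf k)) (s (nf k))
          = G (s (nf k)) (s (nf k)) (s (nf k + 1)) := hG.perm4 _ _ _
      linarith
    have haup : ∀ k, G (s (nf k + 1)) (s (nf k + 1)) (s (mf k + 1))
        ≤ G (s (mf k)) (s (mf k)) (s (mf k + 1)) + G (s (nf k)) (s (nf k)) (s (mf k))
          + G (s (nf k)) (s (nf k + 1)) (s (nf k + 1)) := by
      intro k
      have h0 : G (s (nf k + 1)) (s (nf k + 1)) (s (mf k + 1))
          = G (s (mf k + 1)) (s (nf k + 1)) (s (nf k + 1)) := hG.cycle _ _ _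
      have h1 : G (s (mf k + 1)) (s (nf k + 1)) (s (nf k + 1))
          ≤ G (s (mf k + 1)) (s (mf k)) (s (mf k))
            + G (s (mf k)) (s (nf k + 1)) (s (nf k + 1)) := hG.rect _ _ _ _
      have h2 : G (s (mf k + 1)) (s (mf k)) (s (mf k))
          = G (s (mf k)) (s (mf k)) (s (mf k + 1)) := hG.perm4 _ _ _
      have h3 : G (s (mf k)) (s (nf k + 1)) (s (nf k + 1))
          ≤ G (s (mf k)) (s (nf k)) (s (nf k))
            + G (s (nf k)) (s (nf k + 1)) (s (nf k + 1)) := hG.rect _ _ _ _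
      have h4 : G (s (mf k)) (s (nf k)) (s (nf k))
          = G (s (nf k)) (s (nf k)) (s (mf k)) := hG.perm4 _ _ _
      linarith
    have haT : Tendsto (fun k => G (s (nf k + 1)) (s (nf k + 1)) (s (mf k + 1)))
        atTop (𝓝 (ε/3)) := by
      have hlo : Tendsto (fun k => G (s (nf k)) (s (nf k)) (s (mf k))
          - G (s (mf k)) (s (mf k + 1)) (s (mf k + 1))
          - G (s (nf k)) (s (nf k)) (s (nf k + 1))) atTop (𝓝 (ε/3)) := by
        have := (hβ.sub hgm).sub hen
        simpa using this
      have hhi : Tendsto (fun k => G (s (mf k)) (s (mf k)) (s (mf k + 1))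
          + G (s (nf k)) (s (nf k)) (s (mf k))
          + G (s (nf k)) (s (nf k + 1)) (s (nf k + 1))) atTop (𝓝 (ε/3)) := by
        have := (hem.add hβ).add hgn
        simpa using this
      refine tendsto_of_tendsto_of_tendsto_of_le_of_le hlo hhi
        (fun k => by linarith [halow k]) haup
    have ht2b : ∀ k, G (s (nf k)) (s (nf k + 1)) (s (mf k))
        ≤ G (s (nf k)) (s (nf k)) (s (nf k + 1)) + G (s (nf k)) (s (nf k)) (s (mf k)) := by
      intro k
      have hq : G (s (nf k)) (s (nf k + 1)) (s (mf k))
          = G (s (nf k + 1)) (s (nf k)) (s (mf k)) := hG.swap_left _ _ _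
      have hr : G (s (nf k + 1)) (s (nf k)) (s (mf k))
          ≤ G (s (nf k + 1)) (s (nf k)) (s (nf k))
            + G (s (nf k)) (s (nf k)) (s (mf k)) := hG.rect _ _ _ _
      have hs' : G (s (nf k + 1)) (s (nf k)) (s (nf k))
          = G (s (nf k)) (s (nf k)) (s (nf k + 1)) := hG.perm4 _ _ _
      linarith
    have hbup : ∀ k, Mfun G T (s (nf k)) (s (nf k)) (s (mf k))
        ≤ G (s (nf k)) (s (nf k)) (s (mf k)) + (G (s (nf k)) (s (nf k)) (s (nf k + 1))
          + G (s (mf k)) (s (mf k)) (s (mf k + 1))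
          + G (s (nf k)) (s (nf k + 1)) (s (nf k + 1))
          + G (s (mf k)) (s (mf k + 1)) (s (mf k + 1))) := by
      intro k
      have e1 : T (s (nf k)) = s (nf k + 1) := (hs_succ (nf k)).symm
      have e2 : T (s (mf k)) = s (mf k + 1) := (hs_succ (mf k)).symm
      have nn0 := hG.nonneg (s (nf k)) (s (nf k)) (s (mf k))
      have nn1 := hG.nonneg (s (nf k)) (s (nf k)) (s (nf k + 1))
      have nn2 := hG.nonneg (s (mf k)) (s (mf k)) (s (mf k + 1))
      have nn3 := hG.nonneg (s (nf k)) (s (nf k + 1)) (s (nf k + 1))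
      have nn4 := hG.nonneg (s (mf k)) (s (mf k + 1)) (s (mf k + 1))
      refine Mfun_le ?_ ?_ ?_ ?_ ?_ ?_
      · rw [e1]
        have hp : G (s (nf k)) (s (nf k + 1)) (s (nf k))
            = G (s (nf k)) (s (nf k)) (s (nf k + 1)) := hG.swap_right _ _ _
        rw [hp]
        linarith
      · rw [e1]
        linarith [ht2b k]
      · linarith
      · rw [e1]
        linarith
      · rw [e2]
        linarith
      · rw [e1, e2]
        have hfirst : G (s (nf k)) (s (nf k + 1)) (s (mf k + 1))
            ≤ G (s (mf k)) (s (mf k)) (s (mf k + 1))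
              + (G (s (nf k)) (s (nf k)) (s (nf k + 1))
                + G (s (nf k)) (s (nf k)) (s (mf k))) := by
          have hp1 : G (s (nf k)) (s (nf k + 1)) (s (mf k + 1))
              = G (s (mf k + 1)) (s (nf k)) (s (nf k + 1)) := hG.cycle _ _ _
          have hr1 : G (s (mf k + 1)) (s (nf k)) (s (nf k + 1))
              ≤ G (s (mf k + 1)) (s (mf k)) (s (mf k))
                + G (s (mf k)) (s (nf k)) (s (nf k + 1)) := hG.rect _ _ _ _
          have hp2 : G (s (mf k + 1)) (s (mf k)) (s (mf k))
              = G (s (mf k)) (s (mf k)) (s (mf k + 1)) := hG.perm4 _ _ _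
          have hp3 : G (s (mf k)) (s (nf k)) (s (nf k + 1))
              = G (s (nf k)) (s (nf k + 1)) (s (mf k)) := hG.perm4 _ _ _
          linarith [ht2b k]
        have hsecond : G (s (nf k + 1)) (s (nf k)) (s (mf k))
            ≤ G (s (nf k)) (s (nf k)) (s (nf k + 1))
              + G (s (nf k)) (s (nf k)) (s (mf k)) := by
          have hq : G (s (nf k + 1)) (s (nf k)) (s (mf k))
              = G (s (nf k)) (s (nf k + 1)) (s (mf k)) := hG.swap_left _ _ _
          linarith [ht2b k]
        linarith
    have hblow : ∀ k, G (s (nf k)) (s (nf k)) (s (mf k))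
        ≤ Mfun G T (s (nf k)) (s (nf k)) (s (mf k)) :=
      fun k => le_Mfun₃ G T _ _ _
    have hbT : Tendsto (fun k => Mfun G T (s (nf k)) (s (nf k)) (s (mf k)))
        atTop (𝓝 (ε/3)) := by
      have hhi : Tendsto (fun k => G (s (nf k)) (s (nf k)) (s (mf k))
          + (G (s (nf k)) (s (nf k)) (s (nf k + 1))
            + G (s (mf k)) (s (mf k)) (s (mf k + 1))
            + G (s (nf k)) (s (nf k + 1)) (s (nf k + 1))
            + G (s (mf k)) (s (mf k + 1)) (s (mf k + 1)))) atTop (𝓝 (ε/3)) := by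
        have := hβ.add (((hen.add hem).add hgn).add hgm)
        simpa using this
      exact tendsto_of_tendsto_of_tendsto_of_le_of_le hβ hhi hblow hbup
    have hineq : ∀ k, (∫ t in (0:ℝ)..(ψ (G (s (nf k + 1)) (s (nf k + 1)) (s (mf k + 1)))), ρ t)
        ≤ (∫ t in (0:ℝ)..(ψ (Mfun G T (s (nf k)) (s (nf k)) (s (mf k)))), ρ t)
          - ∫ t in (0:ℝ)..(φ (Mfun G T (s (nf k)) (s (nf k)) (s (mf k)))), ρ t := by
      intro k
      have h := hcontr (s (nf k)) (s (nf k)) (s (mf k)) le_rfl (hs_mono (hnmf k).le)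
      rw [← hs_succ (nf k), ← hs_succ (mf k)] at h
      exact h
    exact key _ _ (ε/3) hε₀ (fun k => hG.nonneg _ _ _)
      (fun k => le_trans (hG.nonneg _ _ _) (hblow k)) haT hbT hineq
  obtain ⟨xs, hxs⟩ := hcomp s hcauchy
  have hxs' : Tendsto (fun n => G xs (s n) (s n)) atTop (𝓝 0) := hxs
  refine ⟨xs, ?_⟩
  rcases hcases with hTc | hreg
  · -- T is G-continuous
    have h2 : Tendsto (fun n => G (T xs) (T (s n)) (T (s n))) atTop (𝓝 0) := hTc s xs hxs
    have hkey : ∀ n, G xs (T xs) (T xs)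
        ≤ G xs (s (n+1)) (s (n+1)) + 2 * G (T xs) (T (s n)) (T (s n)) := by
      intro n
      rw [← hs_succ n]
      have h1 : G xs (T xs) (T xs) ≤ G xs (s (n+1)) (s (n+1)) + G (s (n+1)) (T xs) (T xs) :=
        hG.rect _ _ _ _
      have h3 : G (s (n+1)) (T xs) (T xs) ≤ 2 * G (s (n+1)) (s (n+1)) (T xs) := hG.two_le _ _
      have h4 : G (s (n+1)) (s (n+1)) (T xs) = G (T xs) (s (n+1)) (s (n+1)) := hG.cycle _ _ _
      linarith
    have hlim : Tendsto (fun n => G xs (s (n+1)) (s (n+1))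
        + 2 * G (T xs) (T (s n)) (T (s n))) atTop (𝓝 0) := by
      have ha := hxs'.comp (tendsto_add_atTop_nat 1)
      have hb := h2.const_mul 2
      simpa using ha.add hb
    have hle : G xs (T xs) (T xs) ≤ 0 := ge_of_tendsto hlim (Eventually.of_forall hkey)
    by_contra hne
    have hpos := hG.pos_of_ne (T xs) xs hne
    have hcyc : G (T xs) (T xs) xs = G xs (T xs) (T xs) := hG.cycle _ _ _
    linarith
  · -- regular non-decreasing
    have hsn : ∀ n, s n ≤ xs := hreg s xs hs_mono hxs
    by_contra hne
    have hpos := hG.pos_of_ne (T xs) xs hne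
    have hcyc : G (T xs) (T xs) xs = G xs (T xs) (T xs) := hG.cycle _ _ _
    have hd : 0 < G xs (T xs) (T xs) := by linarith
    have ht1 : Tendsto (fun n => G xs (s (n+1)) (s (n+1))) atTop (𝓝 0) :=
      hxs'.comp (tendsto_add_atTop_nat 1)
    have halow : ∀ n, G xs (T xs) (T xs) - G xs (s (n+1)) (s (n+1))
        ≤ G (s (n+1)) (T xs) (T xs) := by
      intro n
      have := hG.rect xs (T xs) (T xs) (s (n+1))
      linarith
    have haup : ∀ n, G (s (n+1)) (T xs) (T xs)
        ≤ 2 * G xs (s (n+1)) (s (n+1)) + G xs (T xs) (T xs) := by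
      intro n
      have h1 : G (s (n+1)) (T xs) (T xs) ≤ G (s (n+1)) xs xs + G xs (T xs) (T xs) :=
        hG.rect _ _ _ _
      have h2 : G (s (n+1)) xs xs ≤ 2 * G (s (n+1)) (s (n+1)) xs := hG.two_le _ _
      have h3 : G (s (n+1)) (s (n+1)) xs = G xs (s (n+1)) (s (n+1)) := hG.cycle _ _ _
      linarith
    have haT : Tendsto (fun n => G (s (n+1)) (T xs) (T xs)) atTop
        (𝓝 (G xs (T xs) (T xs))) := by
      have hlo : Tendsto (fun n => G xs (T xs) (T xs) - G xs (s (n+1)) (s (n+1))) atTop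
          (𝓝 (G xs (T xs) (T xs))) := by
        simpa using tendsto_const_nhds.sub ht1
      have hhi : Tendsto (fun n => 2 * G xs (s (n+1)) (s (n+1)) + G xs (T xs) (T xs)) atTop
          (𝓝 (G xs (T xs) (T xs))) := by
        simpa using (ht1.const_mul 2).add tendsto_const_nhds
      exact tendsto_of_tendsto_of_tendsto_of_le_of_le hlo hhi halow haup
    have hblow : ∀ n, G xs (T xs) (T xs) ≤ Mfun G T (s n) xs xs :=
      fun n => le_Mfun₄ G T _ _ _
    have hbup : ∀ n, Mfun G T (s n) xs xs ≤ G xs (T xs) (T xs)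
        + (3 * G xs (s n) (s n) + G (s n) (s n) (s (n+1))
          + 2 * G xs (s (n+1)) (s (n+1))) := by
      intro n
      have e1 : T (s n) = s (n+1) := (hs_succ n).symm
      have nn_t : 0 ≤ G xs (s n) (s n) := hG.nonneg _ _ _
      have nn_t1 : 0 ≤ G xs (s (n+1)) (s (n+1)) := hG.nonneg _ _ _
      have nn_e : 0 ≤ G (s n) (s n) (s (n+1)) := hG.nonneg _ _ _
      have nn_d : 0 ≤ G xs (T xs) (T xs) := hG.nonneg _ _ _
      have ht1b : G (s n) (s (n+1)) xs ≤ G xs (s n) (s n) + G (s n) (s n) (s (n+1)) := by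
        have hp : G (s n) (s (n+1)) xs = G xs (s n) (s (n+1)) := hG.cycle _ _ _
        have hr := hG.rect xs (s n) (s (n+1)) (s n)
        linarith
      have ht3b : G (s n) xs xs ≤ 2 * G xs (s n) (s n) := by
        have h1 : G (s n) xs xs ≤ 2 * G (s n) (s n) xs := hG.two_le _ _
        have h2 : G (s n) (s n) xs = G xs (s n) (s n) := hG.cycle _ _ _
        linarith
      have ht6a : G (s n) (T xs) (T xs) ≤ 2 * G xs (s n) (s n) + G xs (T xs) (T xs) := by
        have h1 : G (s n) (T xs) (T xs) ≤ G (s n) xs xs + G xs (T xs) (T xs) := hG.rect _ _ _ _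
        linarith
      have ht6b : G (s (n+1)) xs xs ≤ 2 * G xs (s (n+1)) (s (n+1)) := by
        have h1 : G (s (n+1)) xs xs ≤ 2 * G (s (n+1)) (s (n+1)) xs := hG.two_le _ _
        have h2 : G (s (n+1)) (s (n+1)) xs = G xs (s (n+1)) (s (n+1)) := hG.cycle _ _ _
        linarith
      refine Mfun_le ?_ ?_ ?_ ?_ ?_ ?_
      · rw [e1]; linarith
      · rw [e1]; linarith
      · linarith
      · linarith
      · linarith
      · rw [e1]; linarith
    have hbT : Tendsto (fun n => Mfun G T (s n) xs xs) atTop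
        (𝓝 (G xs (T xs) (T xs))) := by
      have hhi : Tendsto (fun n => G xs (T xs) (T xs)
          + (3 * G xs (s n) (s n) + G (s n) (s n) (s (n+1))
            + 2 * G xs (s (n+1)) (s (n+1)))) atTop (𝓝 (G xs (T xs) (T xs))) := by
        have hcomb := ((hxs'.const_mul 3).add he0).add (ht1.const_mul 2)
        simpa using tendsto_const_nhds.add hcomb
      exact tendsto_of_tendsto_of_tendsto_of_le_of_le tendsto_const_nhds hhi hblow hbup
    have hineq : ∀ n, (∫ t in (0:ℝ)..(ψ (G (s (n+1)) (T xs) (T xs))), ρ t)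
        ≤ (∫ t in (0:ℝ)..(ψ (Mfun G T (s n) xs xs)), ρ t)
          - ∫ t in (0:ℝ)..(φ (Mfun G T (s n) xs xs)), ρ t := by
      intro n
      have h := hcontr (s n) xs xs (hsn n) le_rfl
      rw [← hs_succ n] at h
      exact h
    exact key _ _ _ hd (fun n => hG.nonneg _ _ _)
      (fun n => le_trans (hG.nonneg _ _ _) (hblow n)) haT hbT hineq
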